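/- Let d = 2, Q_1 = [0,1/5]^2 and Q_2 = [2/5,3/5]^2, both elements of Q_1^(2)(F^(2)). For every real p with 1 < p < log 10 / log 5, the ratio E_{p,m}(Q_1, Γ(Q_1)^c) / E_{p,m}(Q_2, Γ(Q_2)^c) tends to +∞ as m → ∞. -/

import Mathlib

open Set MeasureTheory Filter
open scoped Classical

noncomputable section

/-- Points of `ℝ^d` with the Euclidean metric. -/
abbrev Pt (d : ℕ) := EuclideanSpace ℝ (Fin d)

/-- The closed cube `∏ [(lᵢ-1)/5ⁿ, lᵢ/5ⁿ]`. -/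
def cube (d n : ℕ) (l : Fin d → ℕ) : Set (Pt d) :=
  {x | ∀ i, ((l i : ℝ) - 1) / 5 ^ n ≤ x i ∧ x i ≤ (l i : ℝ) / 5 ^ n}

/-- The collection `𝒬ₙ⁽ᵈ⁾` of level-`n` cubes. -/
def Qcol (d n : ℕ) : Set (Set (Pt d)) :=
  {Q | ∃ l : Fin d → ℕ, (∀ i, 1 ≤ l i ∧ l i ≤ 5 ^ n) ∧ Q = cube d n l}

/-- `𝒬ₙ⁽ᵈ⁾(A)`: the level-`n` cubes whose interior meets `A`. -/
def QcolOf (d n : ℕ) (A : Set (Pt d)) : Set (Set (Pt d)) :=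
  {Q | Q ∈ Qcol d n ∧ (interior Q ∩ A).Nonempty}

/-- `F₀⁽ᵈ⁾ = [0,1]^d`. -/
def F0 (d : ℕ) : Set (Pt d) := {x | ∀ i, x i ∈ Icc (0 : ℝ) 1}

/-- `F₁⁽ᵈ⁾`. -/
def F1 (d : ℕ) : Set (Pt d) :=
  F0 d \ ⋃ i : Fin d, {x | (∀ j, j < i → x j ∈ Ioo (2/5 : ℝ) (3/5)) ∧
    x i ∈ Ioo (1/5 : ℝ) (2/5) ∪ Ioo (3/5 : ℝ) (4/5) ∧
    ∀ j, i < j → x j ∈ Ioo (2/5 : ℝ) (3/5)}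

/-- The orientation-preserving affine map from `[0,1]^d` onto the cube indexed by `l` at
level `n`. -/
def psi (d n : ℕ) (l : Fin d → ℕ) (x : Pt d) : Pt d :=
  WithLp.toLp 2 (fun i => ((l i : ℝ) - 1) / 5 ^ n + x i / 5 ^ n)

/-- The approximations `Fₙ⁽ᵈ⁾`. -/
def Fn (d : ℕ) : ℕ → Set (Pt d)
  | 0 => F0 d
  | 1 => F1 d
  | n + 2 => ⋃ l ∈ {l : Fin d → ℕ | cube d 1 l ∈ QcolOf d 1 (F1 d)}, psi d 1 l '' Fn d (n + 1)

/-- The fractal `F⁽ᵈ⁾`. -/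
def Fset (d : ℕ) : Set (Pt d) := ⋂ n, Fn d n

/-- `G₁⁽ᵈ⁾`: union of the level-1 cubes of `F₁⁽ᵈ⁾` which meet the boundary of `[0,1]^d`. -/
def G1 (d : ℕ) : Set (Pt d) :=
  ⋃ Q ∈ {Q | Q ∈ QcolOf d 1 (F1 d) ∧ (Q ∩ frontier (F0 d)).Nonempty}, Q

/-- The approximations `Gₙ⁽ᵈ⁾`. -/
def Gn (d : ℕ) : ℕ → Set (Pt d)
  | 0 => F0 d
  | 1 => G1 d
  | n + 2 => ⋃ l ∈ {l : Fin d → ℕ | cube d 1 l ∈ QcolOf d 1 (G1 d)}, psi d 1 l '' Gn d (n + 1)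

/-- The boundary fractal `G⁽ᵈ⁾ = [0,1]^d ∩ ⋂_{n ≥ 1} Gₙ⁽ᵈ⁾`. -/
def Gset (d : ℕ) : Set (Pt d) := F0 d ∩ ⋂ n, ⋂ (_ : 1 ≤ n), Gn d n

/-- The discrete `p`-energy `𝓔ₚⁿ(f)` on the level-`n` cubes of `F⁽ᵈ⁾`. -/
def energy (d n : ℕ) (p : ℝ) (f : Set (Pt d) → ℝ) : ℝ :=
  (1 / 2) * ∑' Q : QcolOf d n (Fset d), ∑' Q' : QcolOf d n (Fset d),
    if ((Q : Set (Pt d)) ∩ (Q' : Set (Pt d))).Nonempty then |f Q - f Q'| ^ p else 0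

/-- `Sᵐ(A)`: level-`(n+m)` cubes of `F⁽ᵈ⁾` contained in some cube of `A`. -/
def Sm (d n m : ℕ) (A : Set (Set (Pt d))) : Set (Set (Pt d)) :=
  {Q | Q ∈ QcolOf d (n + m) (Fset d) ∧ ∃ Q' ∈ A, Q ⊆ Q'}

/-- The effective `p`-conductance `𝓔_{p,m}(A₁, A₂)`. -/
def conduct (d n m : ℕ) (p : ℝ) (A₁ A₂ : Set (Set (Pt d))) : ℝ :=
  sInf {e : ℝ | ∃ f : Set (Pt d) → ℝ,
    (∀ Q ∈ Sm d n m A₁, f Q = 1) ∧ (∀ Q ∈ Sm d n m A₂, f Q = 0) ∧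
    e = energy d (n + m) p f}

/-- `Γ(Q)`: level-`n` cubes of `F⁽ᵈ⁾` meeting `Q`. -/
def Gam (d n : ℕ) (Q : Set (Pt d)) : Set (Set (Pt d)) :=
  {Q' | Q' ∈ QcolOf d n (Fset d) ∧ (Q' ∩ Q).Nonempty}

/-- `Γ(Q)ᶜ = 𝒬ₙ⁽ᵈ⁾(F⁽ᵈ⁾) \ Γ(Q)`. -/
def GamC (d n : ℕ) (Q : Set (Pt d)) : Set (Set (Pt d)) :=
  QcolOf d n (Fset d) \ Gam d n Q

/-- The corner cube `[0, 1/5]^d`. -/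
def Qone (d : ℕ) : Set (Pt d) := {x | ∀ i, x i ∈ Icc (0 : ℝ) (1/5)}

/-- The center cube `[2/5, 3/5]^d`. -/
def Qtwo (d : ℕ) : Set (Pt d) := {x | ∀ i, x i ∈ Icc (2/5 : ℝ) (3/5)}

end

/-!
The center cube `Q₂` meets the rest of `F⁽²⁾` only at its four corners, because the four level-`1`
cells along its sides are removed. So the indicator of `Sᵐ({Q₂})` has energy at most `4`, while
every admissible function has positive energy. The corner cube `Q₁`, in contrast, is joined to the
cell `[2/5, 3/5] × [0, 1/5]` of `Γ(Q₁)ᶜ` by `2ᵐ` disjoint horizontal chains of `5ᵐ + 1` adjacent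
level-`(m+1)` cells of `F⁽²⁾`, one for each row whose base-`5` digits all lie in `{1, 5}`. By
Hölder's inequality each chain carries energy at least `(5ᵐ + 1)^(1-p)`. The ratio is therefore at
least a constant times `(2 · 5^(1-p))ᵐ`, and `2 · 5^(1-p) > 1` is the condition
`p < log 10 / log 5`.
-/

namespace FractalConductance

open Set Finset

section CubeGeometry

variable {d n : ℕ}

lemma interior_cube (l : Fin d → ℕ) : interior (cube d n l) =
    {x | ∀ i, ((l i : ℝ) - 1) / 5 ^ n < x i ∧ x i < (l i : ℝ) / 5 ^ n} := by
  have h : cube d n l = PiLp.homeomorph 2 (fun _ : Fin d => ℝ) ⁻¹'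
      Set.pi univ (fun i => Icc (((l i : ℝ) - 1) / 5 ^ n) ((l i : ℝ) / 5 ^ n)) := by
    ext x; simp [cube, PiLp.homeomorph, -Set.pi_univ_Icc]
  rw [h, ← Homeomorph.preimage_interior, interior_pi_set finite_univ]
  ext x; simp [PiLp.homeomorph]

lemma interior_cube_nonempty (l : Fin d → ℕ) : (interior (cube d n l)).Nonempty := by
  refine ⟨WithLp.toLp 2 fun i => ((l i : ℝ) - 1 / 2) / 5 ^ n, ?_⟩
  rw [interior_cube]
  intro i
  dsimp only
  constructor <;> gcongr <;> norm_num

lemma cube_inter_nonempty_iff {a b : Fin d → ℕ} :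
    (cube d n a ∩ cube d n b).Nonempty ↔ ∀ i, a i ≤ b i + 1 ∧ b i ≤ a i + 1 := by
  have h5 : (0 : ℝ) < 5 ^ n := by positivity
  constructor
  · rintro ⟨x, hxa, hxb⟩ i
    have ha := hxa i
    have hb := hxb i
    have h1 : ((a i : ℝ) - 1) / 5 ^ n ≤ b i / 5 ^ n := ha.1.trans hb.2
    have h2 : ((b i : ℝ) - 1) / 5 ^ n ≤ a i / 5 ^ n := hb.1.trans ha.2
    rw [div_le_div_iff_of_pos_right h5] at h1 h2
    exact ⟨by exact_mod_cast (by linarith : (a i : ℝ) ≤ b i + 1),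
      by exact_mod_cast (by linarith : (b i : ℝ) ≤ a i + 1)⟩
  · intro h
    refine ⟨WithLp.toLp 2 fun i => ((max (a i) (b i) : ℕ) - 1 : ℝ) / 5 ^ n,
      fun i => ?_, fun i => ?_⟩ <;>
    · have := h i
      dsimp only
      constructor <;> gcongr <;> first | omega | (rw [sub_le_iff_le_add]; norm_cast; omega)

lemma div_five_pow_add (u : ℝ) (m : ℕ) : u / 5 ^ (m + n) = u / 5 ^ m / 5 ^ n := by
  rw [pow_add, div_div]

lemma cube_subset_cube_iff {m : ℕ} {l a : Fin d → ℕ} :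
    cube d (m + n) l ⊆ cube d n a ↔ ∀ i, 5 ^ m * a i < l i + 5 ^ m ∧ l i ≤ 5 ^ m * a i := by
  have key : ∀ i, (((a i : ℝ) - 1) / 5 ^ n ≤ ((l i : ℝ) - 1) / 5 ^ (m + n) ∧
      (l i : ℝ) / 5 ^ (m + n) ≤ a i / 5 ^ n) ↔ 5 ^ m * a i < l i + 5 ^ m ∧ l i ≤ 5 ^ m * a i := by
    intro i
    have h5 : (0 : ℝ) < 5 ^ m := by positivity
    rw [div_five_pow_add, div_five_pow_add, div_le_div_iff_of_pos_right (by positivity),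
      div_le_div_iff_of_pos_right (by positivity), le_div_iff₀ h5, div_le_iff₀ h5,
      Nat.lt_iff_add_one_le, ← Nat.cast_le (α := ℝ), ← Nat.cast_le (α := ℝ)]
    push_cast
    constructor <;> rintro ⟨h1, h2⟩ <;> constructor <;> linarith
  constructor
  · intro h i
    refine (key i).1 ⟨(h (a := WithLp.toLp 2 fun j => ((l j : ℝ) - 1) / 5 ^ (m + n)) ?_ i).1,
      (h (a := WithLp.toLp 2 fun j => (l j : ℝ) / 5 ^ (m + n)) ?_ i).2⟩ <;>
    · intro j
      dsimp only
      constructor <;> gcongr; linarith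
  · intro h x hx i
    exact ⟨((key i).2 (h i)).1.trans (hx i).1, (hx i).2.trans ((key i).2 (h i)).2⟩

lemma cube_injective : Function.Injective (cube d n) := fun l a h => by
  have hsub : cube d (0 + n) l ⊆ cube d n a := by rw [zero_add, h]
  have := cube_subset_cube_iff.1 hsub
  funext i
  have := this i
  simp only [pow_zero, one_mul] at this
  omega

lemma eq_of_interior_cube_inter_cube {a b : Fin d → ℕ}
    (h : (interior (cube d n b) ∩ cube d n a).Nonempty) : a = b := by
  obtain ⟨x, hxb, hxa⟩ := h
  rw [interior_cube] at hxb
  funext i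
  have h5 : (0 : ℝ) < 5 ^ n := by positivity
  have h1 : ((b i : ℝ) - 1) / 5 ^ n < a i / 5 ^ n := (hxb i).1.trans_le (hxa i).2
  have h2 : ((a i : ℝ) - 1) / 5 ^ n < b i / 5 ^ n := (hxa i).1.trans_lt (hxb i).2
  rw [div_lt_div_iff_of_pos_right h5] at h1 h2
  have h3 : b i < a i + 1 := by exact_mod_cast (by linarith : (b i : ℝ) < a i + 1)
  have h4 : a i < b i + 1 := by exact_mod_cast (by linarith : (a i : ℝ) < b i + 1)
  omega

end CubeGeometry

def removedCells : Set (Fin 2 → ℕ) := {![2, 3], ![4, 3], ![3, 2], ![3, 4]}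

lemma mem_F1_two_iff {x : Pt 2} :
    x ∈ F1 2 ↔ x ∈ F0 2 ∧ ∀ a ∈ removedCells, x ∉ interior (cube 2 1 a) := by
  simp only [F1, Set.mem_sdiff, mem_iUnion, removedCells, mem_insert_iff, mem_singleton_iff,
    forall_eq_or_imp, forall_eq, interior_cube, mem_ofPred_eq, Fin.forall_fin_two]
  norm_num
  tauto

lemma Fset_subset_F1 (d : ℕ) : Fset d ⊆ F1 d := iInter_subset _ 1

def IsKeptCell (a : Fin 2 → ℕ) : Prop := (∀ i, 1 ≤ a i ∧ a i ≤ 5) ∧ a ∉ removedCells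

lemma cube_one_subset_F0 {d : ℕ} {a : Fin d → ℕ} (ha : ∀ i, 1 ≤ a i ∧ a i ≤ 5) :
    cube d 1 a ⊆ F0 d := fun x hx i => by
  have h1 : (1 : ℝ) ≤ a i := by exact_mod_cast (ha i).1
  have h5 : (a i : ℝ) ≤ 5 := by exact_mod_cast (ha i).2
  have := hx i
  simp only [pow_one] at this
  constructor <;> linarith [this.1, this.2]

lemma cube_one_subset_F1 {a : Fin 2 → ℕ} (ha : IsKeptCell a) : cube 2 1 a ⊆ F1 2 := fun x hx =>
  mem_F1_two_iff.2 ⟨cube_one_subset_F0 ha.1 hx, fun _ hb hxb =>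
    ha.2 (eq_of_interior_cube_inter_cube ⟨x, hxb, hx⟩ ▸ hb)⟩

lemma cube_one_mem_QcolOf_F1 {a : Fin 2 → ℕ} (ha : IsKeptCell a) :
    cube 2 1 a ∈ QcolOf 2 1 (F1 2) :=
  ⟨⟨a, fun i => by simpa using ha.1 i, rfl⟩,
    (interior_cube_nonempty a).mono fun _ hx => ⟨hx, cube_one_subset_F1 ha (interior_subset hx)⟩⟩

lemma not_mem_QcolOf_of_subset_removed {k : ℕ} {a l : Fin 2 → ℕ} (ha : a ∈ removedCells)
    (h : cube 2 k l ⊆ cube 2 1 a) : cube 2 k l ∉ QcolOf 2 k (Fset 2) := fun ⟨_, _, hx, hxF⟩ =>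
  (mem_F1_two_iff.1 (Fset_subset_F1 2 hxF)).2 a ha (interior_mono h hx)

lemma psi_mem_cube {d n : ℕ} (l : Fin d → ℕ) {x : Pt d} (hx : x ∈ F0 d) :
    psi d n l x ∈ cube d n l := fun i => by
  simp only [psi]
  constructor
  · linarith [div_nonneg (hx i).1 (by positivity : (0 : ℝ) ≤ 5 ^ n)]
  · rw [← add_div, div_le_div_iff_of_pos_right (by positivity)]
    linarith [(hx i).2]

lemma psi_mem_Fn_succ {a : Fin 2 → ℕ} (ha : IsKeptCell a) {x : Pt 2} (hx0 : x ∈ F0 2) :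
    ∀ {k : ℕ}, x ∈ Fn 2 k → psi 2 1 a x ∈ Fn 2 (k + 1)
  | 0, _ => cube_one_subset_F1 ha (psi_mem_cube a hx0)
  | _ + 1, hx => mem_iUnion₂.2 ⟨a, cube_one_mem_QcolOf_F1 ha, x, hx, rfl⟩

lemma psi_mem_Fset {a : Fin 2 → ℕ} (ha : IsKeptCell a) {x : Pt 2} (hx : x ∈ Fset 2) :
    psi 2 1 a x ∈ Fset 2 := by
  have hx0 : x ∈ F0 2 := mem_iInter.1 hx 0
  refine mem_iInter.2 fun k => ?_
  cases k with
  | zero => exact (psi_mem_Fn_succ ha hx0 (k := 0) hx0).1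
  | succ k => exact psi_mem_Fn_succ ha hx0 (mem_iInter.1 hx k)

lemma center_mem_Fset : (WithLp.toLp 2 fun _ => 1 / 2 : Pt 2) ∈ Fset 2 := by
  set c : Pt 2 := WithLp.toLp 2 fun _ => 1 / 2
  have hc0 : c ∈ F0 2 := fun i => by norm_num [c]
  have hfix : psi 2 1 ![3, 3] c = c := by
    ext i; fin_cases i <;> norm_num [psi, c]
  have hkept : IsKeptCell ![3, 3] := by
    simp [IsKeptCell, removedCells, Fin.forall_fin_two]
  refine mem_iInter.2 fun k => ?_
  induction k with
  | zero => exact hc0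
  | succ k ih => exact hfix ▸ psi_mem_Fn_succ hkept hc0 ih

/-- `IsCell k l` records that `cube 2 k l = Ψ_{a₁} ∘ ⋯ ∘ Ψ_{a_k} ([0,1]²)` for kept level-`1`
cells `a₁, …, a_k`; `succ` prepends the most significant digit `a`. -/
inductive IsCell : ℕ → (Fin 2 → ℕ) → Prop
  | zero : IsCell 0 fun _ => 1
  | succ {k : ℕ} {a l : Fin 2 → ℕ} :
      IsKeptCell a → IsCell k l → IsCell (k + 1) fun i => 5 ^ k * (a i - 1) + l i

lemma psi_mem_interior_cube {d k : ℕ} {a l : Fin d → ℕ} (ha : ∀ i, 1 ≤ a i) {x : Pt d}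
    (hx : x ∈ interior (cube d k l)) :
    psi d 1 a x ∈ interior (cube d (k + 1) fun i => 5 ^ k * (a i - 1) + l i) := by
  rw [interior_cube] at hx ⊢
  intro i
  have hcast : ((5 ^ k * (a i - 1) + l i : ℕ) : ℝ) = 5 ^ k * ((a i : ℝ) - 1) + l i := by
    push_cast [Nat.cast_sub (ha i)]; ring
  have hsplit : ∀ u : ℝ, (5 ^ k * ((a i : ℝ) - 1) + u) / 5 ^ (k + 1) =
      ((a i : ℝ) - 1) / 5 + u / 5 ^ k / 5 := fun u => by
    field_simp; ring
  simp only [psi, pow_one, hcast]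
  rw [add_sub_assoc, hsplit, hsplit]
  constructor <;> gcongr <;> linarith [(hx i).1, (hx i).2]

namespace IsCell

variable {k : ℕ} {l : Fin 2 → ℕ}

lemma bounds (h : IsCell k l) (i : Fin 2) : 1 ≤ l i ∧ l i ≤ 5 ^ k := by
  induction h with
  | zero => simp
  | @succ k a l ha _ ih =>
    have := ha.1 i
    constructor
    · exact (ih.1).trans (Nat.le_add_left _ _)
    · calc 5 ^ k * (a i - 1) + l i ≤ 5 ^ k * 4 + 5 ^ k := by gcongr <;> omega
        _ = 5 ^ (k + 1) := by ring

lemma interior_inter_Fset_nonempty (h : IsCell k l) :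
    (interior (cube 2 k l) ∩ Fset 2).Nonempty := by
  induction h with
  | zero => exact ⟨_, by rw [interior_cube]; norm_num, center_mem_Fset⟩
  | succ ha _ ih =>
    obtain ⟨x, hx, hxF⟩ := ih
    exact ⟨_, psi_mem_interior_cube (fun i => (ha.1 i).1) hx, psi_mem_Fset ha hxF⟩

lemma mem_QcolOf (h : IsCell k l) : cube 2 k l ∈ QcolOf 2 k (Fset 2) :=
  ⟨⟨l, h.bounds, rfl⟩, h.interior_inter_Fset_nonempty⟩

lemma succ_vec {a₀ a₁ c r : ℕ} (ha : IsKeptCell ![a₀, a₁]) (h : IsCell k ![c, r]) :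
    IsCell (k + 1) ![5 ^ k * (a₀ - 1) + c, 5 ^ k * (a₁ - 1) + r] := by
  convert IsCell.succ ha h using 1
  funext i; fin_cases i <;> rfl

end IsCell

lemma isKeptCell_vec_iff {a₀ a₁ : ℕ} :
    IsKeptCell ![a₀, a₁] ↔ (1 ≤ a₀ ∧ a₀ ≤ 5) ∧ (1 ≤ a₁ ∧ a₁ ≤ 5) ∧
      (a₁ = 3 → a₀ ≠ 2 ∧ a₀ ≠ 4) ∧ (a₀ = 3 → a₁ ≠ 2 ∧ a₁ ≠ 4) := by
  simp [IsKeptCell, removedCells, Fin.forall_fin_two]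
  omega

lemma IsKeptCell.isCell_one {a : Fin 2 → ℕ} (ha : IsKeptCell a) : IsCell 1 a := by
  convert IsCell.succ ha IsCell.zero using 1
  funext i; have := (ha.1 i).1; simp; omega

lemma isCell_top_corner (k : ℕ) : IsCell k ![5 ^ k, 5 ^ k] := by
  induction k with
  | zero =>
    convert IsCell.zero using 1
    funext i; fin_cases i <;> rfl
  | succ k ih =>
    have e : 5 ^ k * (5 - 1) + 5 ^ k = 5 ^ (k + 1) := by rw [pow_succ]; omega
    simpa only [e] using ih.succ_vec (a₀ := 5) (a₁ := 5) (isKeptCell_vec_iff.2 (by norm_num))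

/-- The rows `r` such that every base-`5` digit of `r - 1` is `0` or `4`. No removed cell has
row digit `1` or `5`, so every cell of such a row belongs to `F⁽²⁾`. -/
def outerRows : ℕ → Finset ℕ
  | 0 => {1}
  | k + 1 => outerRows k ∪ (outerRows k).image (· + 4 * 5 ^ k)

lemma bounds_of_mem_outerRows {k r : ℕ} (hr : r ∈ outerRows k) : 1 ≤ r ∧ r ≤ 5 ^ k := by
  induction k generalizing r with
  | zero => simp_all [outerRows]
  | succ k ih =>
    rw [pow_succ]
    rcases Finset.mem_union.1 hr with hr | hr
    · have := ih hr; omega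
    · obtain ⟨r', hr', rfl⟩ := mem_image.1 hr
      have := ih hr'; omega

lemma outerRows_subset_succ (k : ℕ) : outerRows k ⊆ outerRows (k + 1) :=
  Finset.subset_union_left

lemma one_mem_outerRows (k : ℕ) : 1 ∈ outerRows k := by
  induction k with
  | zero => simp [outerRows]
  | succ k ih => exact outerRows_subset_succ k ih

lemma card_outerRows (k : ℕ) : #(outerRows k) = 2 ^ k := by
  induction k with
  | zero => simp [outerRows]
  | succ k ih =>
    have hdisj : Disjoint (outerRows k) ((outerRows k).image (· + 4 * 5 ^ k)) := by
      refine Finset.disjoint_left.2 fun r hr hr_image => ?_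
      obtain ⟨r', hr', rfl⟩ := mem_image.1 hr_image
      have := bounds_of_mem_outerRows hr
      have := bounds_of_mem_outerRows hr'
      omega
    rw [outerRows, card_union_of_disjoint hdisj,
      Finset.card_image_of_injective _ (add_left_injective _), ih, pow_succ]
    ring

lemma exists_eq_five_pow_mul_add {k c : ℕ} (h1 : 1 ≤ c) (h2 : c ≤ 5 ^ (k + 1)) :
    ∃ q c', q < 5 ∧ 1 ≤ c' ∧ c' ≤ 5 ^ k ∧ c = 5 ^ k * q + c' := by
  have h5 : 0 < 5 ^ k := by positivity
  refine ⟨(c - 1) / 5 ^ k, (c - 1) % 5 ^ k + 1, ?_, by omega, Nat.mod_lt _ h5, ?_⟩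
  · rw [Nat.div_lt_iff_lt_mul h5, ← pow_succ']; omega
  · have := Nat.div_add_mod (c - 1) (5 ^ k); omega

lemma isCell_of_mem_outerRows {k c r : ℕ} (hr : r ∈ outerRows k) (hc1 : 1 ≤ c)
    (hc2 : c ≤ 5 ^ k) : IsCell k ![c, r] := by
  induction k generalizing c r with
  | zero =>
    simp only [outerRows, Finset.mem_singleton] at hr
    obtain rfl : c = 1 := by simp at hc2; omega
    subst hr
    convert IsCell.zero using 1
    funext i; fin_cases i <;> rfl
  | succ k ih =>
    obtain ⟨q, c', hq, hc'1, hc'2, rfl⟩ := exists_eq_five_pow_mul_add hc1 hc2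
    have kept : ∀ e, e = 1 ∨ e = 5 → IsKeptCell ![q + 1, e] := fun e he =>
      isKeptCell_vec_iff.2 (by omega)
    rcases Finset.mem_union.1 hr with hr | hr
    · simpa using (ih hr hc'1 hc'2).succ_vec (kept 1 (Or.inl rfl))
    · obtain ⟨r', hr', rfl⟩ := mem_image.1 hr
      convert (ih hr' hc'1 hc'2).succ_vec (kept 5 (Or.inr rfl)) using 3
      all_goals first | omega | simp

section Energy

variable {d n : ℕ} {p : ℝ}

lemma QcolOf_finite (d n : ℕ) (A : Set (Pt d)) : (QcolOf d n A).Finite := by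
  refine ((Set.finite_Iic (fun _ : Fin d => 5 ^ n)).image (cube d n)).subset ?_
  rintro Q ⟨⟨l, hl, rfl⟩, -⟩
  exact ⟨l, fun i => (hl i).2, rfl⟩

lemma energy_eq_sum (f : Set (Pt d) → ℝ) :
    energy d n p f = 1 / 2 * ∑ q ∈ (QcolOf_finite d n (Fset d)).toFinset ×ˢ
      (QcolOf_finite d n (Fset d)).toFinset,
      if (q.1 ∩ q.2).Nonempty then |f q.1 - f q.2| ^ p else 0 := by
  set hfin := QcolOf_finite d n (Fset d)
  have := hfin.fintype
  rw [energy, Finset.sum_product, tsum_fintype,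
    Finset.sum_subtype hfin.toFinset (fun _ => hfin.mem_toFinset)]
  congr 1
  refine Finset.sum_congr rfl fun Q _ => ?_
  rw [tsum_fintype, Finset.sum_subtype hfin.toFinset (fun _ => hfin.mem_toFinset)]

lemma energy_nonneg (f : Set (Pt d) → ℝ) : 0 ≤ energy d n p f := by
  rw [energy_eq_sum]
  refine mul_nonneg (by norm_num) (Finset.sum_nonneg fun q _ => ?_)
  split_ifs
  exacts [by positivity, le_rfl]

lemma half_sum_le_energy (f : Set (Pt d) → ℝ) (s : Finset (Set (Pt d) × Set (Pt d)))
    (hs : ∀ e ∈ s, e.1 ∈ QcolOf d n (Fset d) ∧ e.2 ∈ QcolOf d n (Fset d) ∧ (e.1 ∩ e.2).Nonempty) :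
    (∑ e ∈ s, |f e.1 - f e.2| ^ p) / 2 ≤ energy d n p f := by
  rw [energy_eq_sum, div_eq_inv_mul, one_div]
  gcongr
  calc ∑ e ∈ s, |f e.1 - f e.2| ^ p
      = ∑ e ∈ s, if (e.1 ∩ e.2).Nonempty then |f e.1 - f e.2| ^ p else 0 :=
        Finset.sum_congr rfl fun e he => (if_pos (hs e he).2.2).symm
    _ ≤ _ := by
        refine Finset.sum_le_sum_of_subset_of_nonneg (fun e he => ?_) fun q _ _ => ?_
        · simp only [Finset.mem_product, Set.Finite.mem_toFinset]
          exact ⟨(hs e he).1, (hs e he).2.1⟩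
        · split_ifs
          exacts [by positivity, le_rfl]

lemma energy_indicator_le (hp : 0 < p) (S : Set (Set (Pt d)))
    (B : Finset (Set (Pt d) × Set (Pt d)))
    (hB : ∀ Q ∈ QcolOf d n (Fset d), ∀ Q' ∈ QcolOf d n (Fset d),
      (Q ∩ Q').Nonempty → Q ∈ S → Q' ∉ S → (Q, Q') ∈ B) :
    energy d n p (S.indicator 1) ≤ #B := by
  set C := (QcolOf_finite d n (Fset d)).toFinset
  have hterm : ∀ q ∈ C ×ˢ C, (if (q.1 ∩ q.2).Nonempty then
      |S.indicator 1 q.1 - S.indicator (1 : Set (Pt d) → ℝ) q.2| ^ p else 0) ≤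
      (if q ∈ B then 1 else 0) + (if q.swap ∈ B then 1 else 0) := by
    rintro ⟨Q, Q'⟩ hq
    simp only [C, Finset.mem_product, Set.Finite.mem_toFinset] at hq
    have hnonneg : ∀ q : Set (Pt d) × Set (Pt d), (0 : ℝ) ≤ if q ∈ B then 1 else 0 := fun q => by
      split_ifs <;> norm_num
    by_cases hadj : (Q ∩ Q').Nonempty
    swap
    · rw [if_neg hadj]; exact add_nonneg (hnonneg _) (hnonneg _)
    rw [if_pos hadj]
    by_cases hQ : Q ∈ S <;> by_cases hQ' : Q' ∈ S
    · simp [hQ, hQ', Real.zero_rpow hp.ne', hnonneg, add_nonneg]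
    · simp [hQ, hQ', hB Q hq.1 Q' hq.2 hadj hQ hQ', hnonneg]
    · simp [hQ, hQ', hB Q' hq.2 Q hq.1 (Set.inter_comm Q Q' ▸ hadj) hQ' hQ, hnonneg]
    · simp [hQ, hQ', Real.zero_rpow hp.ne', hnonneg, add_nonneg]
  have hswap : #(C ×ˢ C |>.filter fun q => q.swap ∈ B) ≤ #B :=
    Finset.card_le_card_of_injOn Prod.swap (fun q hq => (Finset.mem_filter.1 hq).2)
      (Prod.swap_injective.injOn)
  have hfilter : #(C ×ˢ C |>.filter fun q => q ∈ B) ≤ #B :=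
    Finset.card_le_card fun q hq => (Finset.mem_filter.1 hq).2
  rw [energy_eq_sum]
  calc (1 / 2 : ℝ) * ∑ q ∈ C ×ˢ C, _
      ≤ 1 / 2 * ∑ q ∈ C ×ˢ C, ((if q ∈ B then 1 else 0) + (if q.swap ∈ B then 1 else 0)) := by
        gcongr with q hq; exact hterm q hq
    _ ≤ 1 / 2 * (#B + #B) := by
        rw [Finset.sum_add_distrib, Finset.sum_boole, Finset.sum_boole]
        gcongr
    _ = #B := by ring

end Energy

section Conductance

variable {d n m : ℕ} {p : ℝ} {A₁ A₂ : Set (Set (Pt d))}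

lemma conduct_le_energy {f : Set (Pt d) → ℝ} (h₁ : ∀ Q ∈ Sm d n m A₁, f Q = 1)
    (h₂ : ∀ Q ∈ Sm d n m A₂, f Q = 0) : conduct d n m p A₁ A₂ ≤ energy d (n + m) p f :=
  csInf_le ⟨0, fun _ ⟨_, _, _, he⟩ => he ▸ energy_nonneg _⟩ ⟨f, h₁, h₂, rfl⟩

lemma le_conduct {c : ℝ} (hne : Disjoint (Sm d n m A₁) (Sm d n m A₂))
    (h : ∀ f : Set (Pt d) → ℝ, (∀ Q ∈ Sm d n m A₁, f Q = 1) → (∀ Q ∈ Sm d n m A₂, f Q = 0) →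
      c ≤ energy d (n + m) p f) :
    c ≤ conduct d n m p A₁ A₂ := by
  refine le_csInf ⟨_, (Sm d n m A₁).indicator 1, fun Q hQ => Set.indicator_of_mem hQ _,
    fun Q hQ => Set.indicator_of_notMem (hne.notMem_of_mem_right hQ) _, rfl⟩ ?_
  rintro _ ⟨f, h₁, h₂, rfl⟩
  exact h f h₁ h₂

lemma disjoint_Sm_singleton_GamC (Q : Set (Pt d)) :
    Disjoint (Sm d n m {Q}) (Sm d n m (GamC d n Q)) := by
  refine Set.disjoint_left.2 fun R ⟨hR, _, hQ', hRQ⟩ ⟨_, G, hG, hRG⟩ => ?_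
  obtain ⟨x, hx, -⟩ := hR.2
  exact hG.2 ⟨hG.1, x, hRG (interior_subset hx),
    (mem_singleton_iff.1 hQ') ▸ hRQ (interior_subset hx)⟩

lemma mem_Sm_one_iff {A : Set (Set (Pt d))} {Q : Set (Pt d)} :
    Q ∈ Sm d 1 m A ↔ Q ∈ QcolOf d (m + 1) (Fset d) ∧ ∃ Q' ∈ A, Q ⊆ Q' := by
  rw [Sm, Nat.add_comm]; rfl

lemma cube_mem_GamC {a b : Fin d → ℕ} (ha : cube d n a ∈ QcolOf d n (Fset d))
    (hab : ¬ ∀ i, a i ≤ b i + 1 ∧ b i ≤ a i + 1) : cube d n a ∈ GamC d n (cube d n b) :=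
  ⟨ha, fun h => hab (cube_inter_nonempty_iff.1 h.2)⟩

end Conductance

section Chains

variable {d n : ℕ} {p : ℝ}

lemma rpow_one_sub_mul_le_sum_abs_sub_rpow (hp : 1 ≤ p) {K : ℕ} (hK : 0 < K) (g : ℕ → ℝ) :
    (K : ℝ) ^ (1 - p) * |g 0 - g K| ^ p ≤ ∑ j ∈ range K, |g j - g (j + 1)| ^ p := by
  have htel : |g 0 - g K| ≤ ∑ j ∈ range K, |g j - g (j + 1)| := by
    rw [← Finset.sum_range_sub' g K]
    exact abs_sum_le_sum_abs _ _
  have hholder := Real.rpow_sum_le_const_mul_sum_rpow_of_nonneg (range K) hp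
    (fun j _ => abs_nonneg (g j - g (j + 1)))
  rw [card_range] at hholder
  calc (K : ℝ) ^ (1 - p) * |g 0 - g K| ^ p
      ≤ (K : ℝ) ^ (1 - p) * ((K : ℝ) ^ (p - 1) * ∑ j ∈ range K, |g j - g (j + 1)| ^ p) := by
        gcongr
        exact (Real.rpow_le_rpow (abs_nonneg _) htel (by linarith)).trans hholder
    _ = ∑ j ∈ range K, |g j - g (j + 1)| ^ p := by
        rw [← mul_assoc, ← Real.rpow_add (by positivity)]
        simp

lemma card_mul_rpow_div_two_le_energy (hp : 1 ≤ p) {ι : Type*} (R : Finset ι) {K : ℕ} (hK : 0 < K)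
    (γ : ι → ℕ → Fin d → ℕ) (f : Set (Pt d) → ℝ)
    (hcell : ∀ r ∈ R, ∀ j ≤ K, cube d n (γ r j) ∈ QcolOf d n (Fset d))
    (hadj : ∀ r ∈ R, ∀ j < K, (cube d n (γ r j) ∩ cube d n (γ r (j + 1))).Nonempty)
    (hinj : Set.InjOn (fun q : ι × ℕ => γ q.1 q.2) ↑(R ×ˢ range K))
    (hstart : ∀ r ∈ R, f (cube d n (γ r 0)) = 1) (hend : ∀ r ∈ R, f (cube d n (γ r K)) = 0) :
    #R * (K : ℝ) ^ (1 - p) / 2 ≤ energy d n p f := by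
  set e := fun q : ι × ℕ => (cube d n (γ q.1 q.2), cube d n (γ q.1 (q.2 + 1)))
  have he : Set.InjOn e ↑(R ×ˢ range K) := fun q hq q' hq' h =>
    hinj hq hq' (cube_injective (congrArg Prod.fst h))
  refine le_trans ?_ (half_sum_le_energy f ((R ×ˢ range K).image e) ?_)
  · rw [Finset.sum_image he, Finset.sum_product]
    gcongr
    calc (#R : ℝ) * (K : ℝ) ^ (1 - p) = ∑ r ∈ R, (K : ℝ) ^ (1 - p) := by simp
      _ ≤ _ := Finset.sum_le_sum fun r hr => by
        simpa [hstart r hr, hend r hr] using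
          rpow_one_sub_mul_le_sum_abs_sub_rpow hp hK fun j => f (cube d n (γ r j))
  · intro _ he
    obtain ⟨⟨r, j⟩, hq, rfl⟩ := mem_image.1 he
    rw [Finset.mem_product, Finset.mem_range] at hq
    exact ⟨hcell r hq.1 j hq.2.le, hcell r hq.1 (j + 1) hq.2, hadj r hq.1 j hq.2⟩

end Chains

lemma Qone_eq (d : ℕ) : Qone d = cube d 1 fun _ => 1 := by
  ext x; simp [Qone, cube]

lemma Qtwo_eq (d : ℕ) : Qtwo d = cube d 1 fun _ => 3 := by
  ext x; simp only [Qtwo, cube]; norm_num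

lemma conduct_Qone_ge {p : ℝ} (hp : 1 ≤ p) (m : ℕ) :
    2 ^ m * ((5 ^ m + 1 : ℕ) : ℝ) ^ (1 - p) / 2 ≤ conduct 2 1 m p {Qone 2} (GamC 2 1 (Qone 2)) := by
  refine le_conduct (disjoint_Sm_singleton_GamC _) fun f h₁ h₂ => ?_
  rw [Nat.add_comm 1 m]
  have h5 : 1 ≤ 5 ^ m := Nat.one_le_pow _ _ (by norm_num)
  have hrow : ∀ r ∈ outerRows m, ∀ j ≤ 5 ^ m + 1, IsCell (m + 1) ![5 ^ m + j, r] :=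
    fun r hr j hj => isCell_of_mem_outerRows (outerRows_subset_succ m hr) (by omega)
      (by rw [pow_succ]; omega)
  have hexit : cube 2 1 ![3, 1] ∈ GamC 2 1 (Qone 2) := Qone_eq 2 ▸
    cube_mem_GamC (isKeptCell_vec_iff.2 (by norm_num)).isCell_one.mem_QcolOf
      (by simp [Fin.forall_fin_two])
  have := card_mul_rpow_div_two_le_energy hp (outerRows m) (K := 5 ^ m + 1) (by omega)
    (fun r j => ![5 ^ m + j, r]) f (fun r hr j hj => (hrow r hr j hj).mem_QcolOf)
    (fun r _ j _ => cube_inter_nonempty_iff.2 (by simp [Fin.forall_fin_two]; omega))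
    (fun q _ q' _ h => Prod.ext (congrFun h 1) (by simpa using congrFun h 0))
    (fun r hr => h₁ _ (mem_Sm_one_iff.2 ⟨(hrow r hr 0 (by omega)).mem_QcolOf, Qone 2, rfl,
      Qone_eq 2 ▸ cube_subset_cube_iff.2 (by
        have := bounds_of_mem_outerRows hr
        simp [Fin.forall_fin_two]; omega)⟩))
    (fun r hr => h₂ _ (mem_Sm_one_iff.2 ⟨(hrow r hr _ le_rfl).mem_QcolOf, _, hexit,
      cube_subset_cube_iff.2 (by
        have := bounds_of_mem_outerRows hr
        simp [Fin.forall_fin_two]; omega)⟩))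
  simpa [card_outerRows] using this

/-- The path out of `Q₂`: from its top-right cell diagonally into the level-`1` cell `(4, 4)`,
then along the bottom row of that cell into the cell `(5, 4)`. -/
lemma isCell_center_exit {m j : ℕ} (hj : j ≤ 5 ^ m + 1) :
    IsCell (m + 1) ![3 * 5 ^ m + j, if j = 0 then 3 * 5 ^ m else 3 * 5 ^ m + 1] := by
  have h5 : 1 ≤ 5 ^ m := Nat.one_le_pow _ _ (by norm_num)
  rcases Nat.eq_zero_or_pos j with rfl | hj0
  · convert (isCell_top_corner m).succ_vec (a₀ := 3) (a₁ := 3) (isKeptCell_vec_iff.2 (by norm_num))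
      using 1
    ext i; fin_cases i <;> simp <;> omega
  rcases hj.lt_or_eq with hj | rfl
  · convert (isCell_of_mem_outerRows (one_mem_outerRows m) hj0 (by omega : j ≤ 5 ^ m)).succ_vec
      (a₀ := 4) (a₁ := 4) (isKeptCell_vec_iff.2 (by norm_num)) using 1
    ext i; fin_cases i <;> simp [hj0.ne'] <;> omega
  · convert (isCell_of_mem_outerRows (one_mem_outerRows m) le_rfl h5).succ_vec
      (a₀ := 5) (a₁ := 4) (isKeptCell_vec_iff.2 (by norm_num)) using 1
    ext i; fin_cases i <;> simp <;> omega

lemma conduct_Qtwo_pos {p : ℝ} (hp : 1 ≤ p) (m : ℕ) :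
    0 < conduct 2 1 m p {Qtwo 2} (GamC 2 1 (Qtwo 2)) := by
  have h5 : 1 ≤ 5 ^ m := Nat.one_le_pow _ _ (by norm_num)
  refine lt_of_lt_of_le (by positivity : (0 : ℝ) < ((5 ^ m + 1 : ℕ) : ℝ) ^ (1 - p) / 2)
    (le_conduct (disjoint_Sm_singleton_GamC _) fun f h₁ h₂ => ?_)
  rw [Nat.add_comm 1 m]
  have hexit : cube 2 1 ![5, 4] ∈ GamC 2 1 (Qtwo 2) := Qtwo_eq 2 ▸
    cube_mem_GamC (isKeptCell_vec_iff.2 (by norm_num)).isCell_one.mem_QcolOf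
      (by simp [Fin.forall_fin_two])
  have := card_mul_rpow_div_two_le_energy hp (Finset.univ : Finset Unit) (K := 5 ^ m + 1) (by omega)
    (fun _ j => ![3 * 5 ^ m + j, if j = 0 then 3 * 5 ^ m else 3 * 5 ^ m + 1]) f
    (fun _ _ j hj => (isCell_center_exit hj).mem_QcolOf)
    (fun _ _ j _ => cube_inter_nonempty_iff.2 (by simp [Fin.forall_fin_two]; split_ifs <;> omega))
    (fun q _ q' _ h => Prod.ext rfl (by simpa using congrFun h 0))
    (fun _ _ => h₁ _ (mem_Sm_one_iff.2 ⟨(isCell_center_exit (by omega)).mem_QcolOf, Qtwo 2, rfl,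
      Qtwo_eq 2 ▸ cube_subset_cube_iff.2 (by simp [Fin.forall_fin_two]; omega)⟩))
    (fun _ _ => h₂ _ (mem_Sm_one_iff.2 ⟨(isCell_center_exit le_rfl).mem_QcolOf, _, hexit,
      cube_subset_cube_iff.2 (by simp [Fin.forall_fin_two]; omega)⟩))
  simpa using this

lemma center_boundary_pair {m : ℕ} {a b : Fin 2 → ℕ} (ha : cube 2 (m + 1) a ⊆ Qtwo 2)
    (hb : cube 2 (m + 1) b ∈ QcolOf 2 (m + 1) (Fset 2)) (hbout : ¬ cube 2 (m + 1) b ⊆ Qtwo 2)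
    (hab : (cube 2 (m + 1) a ∩ cube 2 (m + 1) b).Nonempty) :
    ∀ i, (a i = 2 * 5 ^ m + 1 ∧ b i = 2 * 5 ^ m) ∨ (a i = 3 * 5 ^ m ∧ b i = 3 * 5 ^ m + 1) := by
  have hremoved : ∀ c ∈ removedCells, ¬ ∀ i, 5 ^ m * c i < b i + 5 ^ m ∧ b i ≤ 5 ^ m * c i :=
    fun c hc h => not_mem_QcolOf_of_subset_removed hc (cube_subset_cube_iff.2 h) hb
  rw [Qtwo_eq, cube_subset_cube_iff] at ha hbout
  rw [cube_inter_nonempty_iff] at hab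
  simp only [removedCells, mem_insert_iff, mem_singleton_iff, forall_eq_or_imp, forall_eq,
    Fin.forall_fin_two, Matrix.cons_val_zero, Matrix.cons_val_one] at hremoved ha hbout hab ⊢
  omega

lemma conduct_Qtwo_le {p : ℝ} (hp : 0 < p) (m : ℕ) :
    conduct 2 1 m p {Qtwo 2} (GamC 2 1 (Qtwo 2)) ≤ 4 := by
  refine (conduct_le_energy (f := (Sm 2 1 m {Qtwo 2}).indicator 1)
    (fun Q hQ => Set.indicator_of_mem hQ _) (fun Q hQ => Set.indicator_of_notMem
      ((disjoint_Sm_singleton_GamC _).notMem_of_mem_right hQ) _)).trans ?_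
  rw [Nat.add_comm 1 m]
  let B := (Finset.univ : Finset (Fin 2 → Bool)).image fun σ =>
    (cube 2 (m + 1) fun i => if σ i then 3 * 5 ^ m else 2 * 5 ^ m + 1,
      cube 2 (m + 1) fun i => if σ i then 3 * 5 ^ m + 1 else 2 * 5 ^ m)
  refine (energy_indicator_le hp _ B ?_).trans (by exact_mod_cast card_image_le.trans (by simp))
  rintro Q ⟨⟨a, -, rfl⟩, -⟩ Q' hQ' hadj hQ hQ'S
  obtain ⟨b, -, rfl⟩ := hQ'.1
  have ha : cube 2 (m + 1) a ⊆ Qtwo 2 := by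
    obtain ⟨-, _, h, hsub⟩ := mem_Sm_one_iff.1 hQ
    exact mem_singleton_iff.1 h ▸ hsub
  have hcls := center_boundary_pair ha hQ' (fun h => hQ'S (mem_Sm_one_iff.2 ⟨hQ', _, rfl, h⟩)) hadj
  have h5 : 2 * 5 ^ m ≠ 3 * 5 ^ m + 1 := by omega
  refine mem_image.2 ⟨fun i => decide (b i = 3 * 5 ^ m + 1), mem_univ _, ?_⟩
  congr 2 <;> funext i <;> rcases hcls i with h | h <;> simp [h.1, h.2, h5]

lemma one_lt_two_mul_five_rpow {p : ℝ} (hp : p < Real.log 10 / Real.log 5) :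
    1 < 2 * (5 : ℝ) ^ (1 - p) := by
  have hlog5 : 0 < Real.log 5 := Real.log_pos (by norm_num)
  have h10 : Real.log 10 = Real.log 2 + Real.log 5 := by
    rw [← Real.log_mul (by norm_num) (by norm_num)]; norm_num
  have hp' : p * Real.log 5 < Real.log 2 + Real.log 5 := h10 ▸ (lt_div_iff₀ hlog5).1 hp
  rw [Real.rpow_def_of_pos (by norm_num), ← Real.exp_log (two_pos : (0 : ℝ) < 2), ← Real.exp_add]
  exact Real.one_lt_exp_iff.2 (by nlinarith)

lemma five_rpow_mul_pow_le {p : ℝ} (hp : 1 ≤ p) (m : ℕ) :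
    (5 : ℝ) ^ (1 - p) * ((5 : ℝ) ^ (1 - p)) ^ m ≤ ((5 ^ m + 1 : ℕ) : ℝ) ^ (1 - p) := by
  rw [← pow_succ', Real.rpow_pow_comm (by norm_num)]
  refine Real.rpow_le_rpow_of_nonpos (by positivity) ?_ (by linarith)
  have h5 : 1 ≤ 5 ^ m := Nat.one_le_pow _ _ (by norm_num)
  exact_mod_cast (by rw [pow_succ]; omega : 5 ^ m + 1 ≤ 5 ^ (m + 1))

end FractalConductance

open FractalConductance

open Filter in
/-- For `1 < p < log 10 / log 5`, the ratio of the conductances of the corner cube and the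
center cube of `F⁽²⁾` tends to infinity. -/
theorem statement6 (p : ℝ) (hp1 : 1 < p) (hp2 : p < Real.log 10 / Real.log 5) :
    Tendsto (fun m : ℕ =>
      conduct 2 1 m p {Qone 2} (GamC 2 1 (Qone 2)) /
        conduct 2 1 m p {Qtwo 2} (GamC 2 1 (Qtwo 2))) atTop atTop := by
  set c : ℝ := (5 : ℝ) ^ (1 - p)
  refine tendsto_atTop_mono (fun m => ?_)
    ((tendsto_pow_atTop_atTop_of_one_lt (one_lt_two_mul_five_rpow hp2)).const_mul_atTop
      (by positivity : 0 < c / 8))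
  have hnum := conduct_Qone_ge hp1.le m
  calc c / 8 * (2 * c) ^ m = 2 ^ m * (c * c ^ m) / 2 / 4 := by ring
    _ ≤ 2 ^ m * ((5 ^ m + 1 : ℕ) : ℝ) ^ (1 - p) / 2 / 4 := by
        gcongr; exact five_rpow_mul_pow_le hp1.le m
    _ ≤ conduct 2 1 m p {Qone 2} (GamC 2 1 (Qone 2)) / 4 := by gcongr
    _ ≤ _ := div_le_div_of_nonneg_left ((by positivity : (0 : ℝ) ≤ _).trans hnum)
        (conduct_Qtwo_pos hp1.le m) (conduct_Qtwo_le (by linarith) m)
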